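/- For positive integers m ≥ 2 and n with m ≤ 2n, and any j ∈ [-n:n]\{0}, the coefficient magnitude satisfies |a^{(m)}_{n,j}| ≤ (n!)² · m^{2n} / (|j| · (m-1)!). -/

import Mathlib

/-!
Every element of `S = [-n:n] \ {0, j}` is a nonzero integer, so the product over any subset of `S`
is bounded in absolute value by `∏_{l ∈ S} |l| = (n!)² / |j|`. Hence the sum is at most
`C(2n-1, m-1) · (n!)² / |j| ≤ (2n)^(m-1) / (m-1)! · (n!)² / |j|`, and `(2n)^(m-1) ≤ m^(2n)` because
`x ↦ log x / x` decreases beyond `e`.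
-/

open Finset Nat

theorem pow_le_pow_swap_of_three_le {a b : ℕ} (hb : 3 ≤ b) (hba : b ≤ a) : a ^ b ≤ b ^ a := by
  have he : Real.exp 1 ≤ b := Real.exp_one_lt_d9.le.trans <|
    (by norm_num : (2.7182818286 : ℝ) ≤ 3).trans (by exact_mod_cast hb)
  have hba' : (b : ℝ) ≤ a := by exact_mod_cast hba
  have hlog : Real.log a / a ≤ Real.log b / b :=
    Real.log_div_self_antitoneOn he (he.trans hba') hba'
  have hb0 : (0 : ℝ) < b := by positivity
  have ha0 : (0 : ℝ) < a := hb0.trans_le hba'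
  rw [div_le_div_iff₀ ha0 hb0] at hlog
  suffices (a : ℝ) ^ b ≤ (b : ℝ) ^ a by exact_mod_cast this
  rw [← Real.log_le_log_iff (by positivity) (by positivity), Real.log_pow, Real.log_pow]
  linarith

theorem pow_pred_le_pow_swap {a b : ℕ} (hb : 0 < b) (hba : b ≤ a) : a ^ (b - 1) ≤ b ^ a := by
  rcases (show b = 1 ∨ b = 2 ∨ 3 ≤ b by omega) with rfl | rfl | hb3
  · simp
  · simpa using Nat.lt_two_pow_self.le
  · exact (Nat.pow_le_pow_right (by omega) (by omega)).trans (pow_le_pow_swap_of_three_le hb3 hba)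

theorem choose_sub_le_pow_div_factorial {N m : ℕ} (hm : 0 < m) (hmN : m ≤ N) :
    ((N - 1).choose (N - m) : ℝ) ≤ m ^ N / (m - 1)! := by
  rw [choose_symm_of_eq_add (by omega : N - 1 = N - m + (m - 1))]
  calc ((N - 1).choose (m - 1) : ℝ) ≤ ((N - 1 : ℕ) : ℝ) ^ (m - 1) / (m - 1)! :=
        choose_le_pow_div _ _
    _ ≤ (N : ℝ) ^ (m - 1) / (m - 1)! := by gcongr; exact_mod_cast N.sub_le 1
    _ ≤ m ^ N / (m - 1)! := by gcongr; exact_mod_cast pow_pred_le_pow_swap hm hmN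

theorem abs_sum_powersetCard_prod_le {ι R : Type*} [CommRing R] [LinearOrder R]
    [IsStrictOrderedRing R] {s : Finset ι} {f : ι → R} (hf : ∀ i ∈ s, 1 ≤ |f i|) (k : ℕ) :
    |∑ t ∈ s.powersetCard k, ∏ i ∈ t, f i| ≤ (#s).choose k * ∏ i ∈ s, |f i| := by
  calc |∑ t ∈ s.powersetCard k, ∏ i ∈ t, f i|
      ≤ ∑ t ∈ s.powersetCard k, |∏ i ∈ t, f i| := abs_sum_le_sum_abs _ _
    _ ≤ ∑ _t ∈ s.powersetCard k, ∏ i ∈ s, |f i| := by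
        refine sum_le_sum fun t ht => ?_
        rw [abs_prod]
        exact prod_le_prod_of_subset_of_one_le (mem_powersetCard.1 ht).1
          (fun _ _ => abs_nonneg _) fun i hi _ => hf i hi
    _ = (#s).choose k * ∏ i ∈ s, |f i| := by
        rw [sum_const, card_powersetCard, nsmul_eq_mul]

theorem prod_abs_Icc_erase_zero (n : ℕ) :
    ∏ l ∈ (Icc (-(n : ℤ)) n).erase 0, |l| = (n ! : ℤ) ^ 2 := by
  induction n with
  | zero => simp
  | succ n ih =>
    have hsplit : (Icc (-((n + 1 : ℕ) : ℤ)) (n + 1 : ℕ)).erase 0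
        = insert (-(n + 1 : ℤ)) (insert (n + 1 : ℤ) ((Icc (-(n : ℤ)) n).erase 0)) := by
      ext; simp; omega
    rw [hsplit, prod_insert (by simp; omega), prod_insert (by simp), ih, factorial_succ,
      abs_neg, abs_of_pos (by positivity)]
    push_cast
    ring

theorem coef_a_bound_general (m n : ℕ) (hm : 2 ≤ m) (hmn : m ≤ 2 * n)
    (j : ℤ) (hj : j ∈ Finset.Icc (-(n : ℤ)) n) (hj0 : j ≠ 0) :
    |∑ T ∈ Finset.powersetCard (2 * n - m)
        (((Finset.Icc (-(n : ℤ)) n).erase 0).erase j), ∏ l ∈ T, (l : ℝ)|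
      ≤ ((n.factorial : ℝ)) ^ 2 * (m : ℝ) ^ (2 * n) /
          ((|j| : ℝ) * ((m - 1).factorial : ℝ)) := by
  set S := ((Icc (-(n : ℤ)) n).erase 0).erase j
  have hjS : j ∈ (Icc (-(n : ℤ)) n).erase 0 := mem_erase.2 ⟨hj0, hj⟩
  have hcard : #S = 2 * n - 1 := by
    rw [card_erase_of_mem hjS, card_erase_of_mem (by simp), Int.card_Icc]
    omega
  have hS : ∀ l ∈ S, 1 ≤ |(l : ℝ)| := fun l hl => by
    exact_mod_cast Int.one_le_abs (mem_erase.1 (mem_erase.1 hl).2).1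
  have hprod : ∏ l ∈ S, |(l : ℝ)| = (n ! : ℝ) ^ 2 / |(j : ℝ)| := by
    rw [eq_div_iff (by positivity), mul_comm]
    exact_mod_cast (mul_prod_erase _ (fun l => |l|) hjS).trans (prod_abs_Icc_erase_zero n)
  calc _ ≤ ((2 * n - 1).choose (2 * n - m) : ℝ) * ∏ l ∈ S, |(l : ℝ)| :=
        hcard ▸ abs_sum_powersetCard_prod_le hS _
    _ ≤ m ^ (2 * n) / (m - 1)! * ((n ! : ℝ) ^ 2 / |(j : ℝ)|) := by
        rw [hprod]
        gcongr
        exact choose_sub_le_pow_div_factorial (by omega) hmn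
    _ = _ := by
        ring

theorem coef_a_bound (m n : ℕ) (hm : 2 ≤ m) (hn : 1 ≤ n) (hmn : m ≤ 2 * n)
    (j : ℤ) (hj : j ∈ Finset.Icc (-(n : ℤ)) n) (hj0 : j ≠ 0) :
    |∑ T ∈ Finset.powersetCard (2 * n - m)
        (((Finset.Icc (-(n : ℤ)) n).erase 0).erase j), ∏ l ∈ T, (l : ℝ)|
      ≤ ((n.factorial : ℝ)) ^ 2 * (m : ℝ) ^ (2 * n) /
          ((|j| : ℝ) * ((m - 1).factorial : ℝ)) :=
  coef_a_bound_general m n hm hmn j hj hj0
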